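/- arXiv:2412.06540 — 2 statements merged into one kernel-verified Lean document; each statement's English description precedes it below -/
import Mathlib

section
/- (Identifiability of Sloth with identity skill covariance) Let X ∈ ℝ^{n×p} have rank p, Λ, Λ̃ ∈ ℝ^{J×d} have rank d, b, b̃ ∈ ℝ^J, and B, B̃ ∈ ℝ^{p×d}. Assume the rows θ⁽ⁱ⁾ of XB satisfy (1/n)Σᵢ θ⁽ⁱ⁾ = 0 and (1/n)Σᵢ θ⁽ⁱ⁾ᵀθ⁽ⁱ⁾ = I_d, and similarly for the rows of XB̃. If Λ (XB)⁽ⁱ⁾ᵀ + b = Λ̃ (XB̃)⁽ⁱ⁾ᵀ + b̃ for all i ∈ [n], then b̃ = b, and there exists an orthogonal matrix M ∈ ℝ^{d×d} such that Λ̃ = Λ M and B̃ = B M. -/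
/-!
Summing the model equation over the centred rows kills the linear parts, so `b' = b`.
Then `Θ Λᵀ = Θ' Λ'ᵀ` for `Θ = XB`, `Θ' = XB'`, both with Gram matrix `n • 1`. The
cross-covariance `M = Θᵀ Θ' / n` satisfies `Λᵀ = M Λ'ᵀ` and `Λ'ᵀ = Mᵀ Λᵀ`, so
`Mᵀ M Λ'ᵀ = Λ'ᵀ`, and `Λ'ᵀ` cancels on the right because `Λ'` has full column rank; likewise
`Θ' = Θ M`, and full column rank of `X` turns this into `B' = B M`.
-/

open Matrix

namespace Matrix

variable {m n o : Type*} [Fintype n] {K : Type*} [Field K]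

theorem eq_of_mulVec_add_eq_of_sum_eq_zero {ι J : Type*} [Fintype ι] [Nonempty ι] [CharZero K]
    {A A' : Matrix J n K} {v v' : ι → n → K} {b b' : J → K}
    (hv : ∑ i, v i = 0) (hv' : ∑ i, v' i = 0) (h : ∀ i, A *ᵥ v i + b = A' *ᵥ v' i + b') :
    b = b' := by
  have hsum := Finset.sum_congr rfl fun i (_ : i ∈ Finset.univ) => h i
  simp only [Finset.sum_add_distrib, ← mulVec_sum, hv, hv', mulVec_zero, zero_add,
    Finset.sum_const, Finset.card_univ] at hsum
  exact nsmul_right_injective Fintype.card_ne_zero hsum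

variable [DecidableEq n]

theorem isUnit_of_rank_eq_card {A : Matrix n n K} (h : A.rank = Fintype.card n) : IsUnit A := by
  have hrange : LinearMap.range A.mulVecLin = ⊤ :=
    Submodule.eq_top_of_finrank_eq (by rw [← rank, h, Module.finrank_fintype_fun_eq_card])
  exact mulVec_surjective_iff_isUnit.mp (LinearMap.range_eq_top.mp hrange)

theorem isUnit_transpose_mul_self_of_rank_eq_card [Fintype m] [LinearOrder K]
    [IsStrictOrderedRing K] {A : Matrix m n K} (h : A.rank = Fintype.card n) : IsUnit (Aᵀ * A) :=
  isUnit_of_rank_eq_card (by rw [rank_transpose_mul_self, h])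

theorem mul_right_injective_of_isUnit_transpose_mul_self [Fintype m] {A : Matrix m n K}
    (h : IsUnit (Aᵀ * A)) : Function.Injective fun P : Matrix n o K => A * P := by
  intro P Q (hPQ : A * P = A * Q)
  have hdet := (isUnit_iff_isUnit_det _).mp h
  calc P = (Aᵀ * A)⁻¹ * (Aᵀ * A * P) := (nonsing_inv_mul_cancel_left _ P hdet).symm
    _ = (Aᵀ * A)⁻¹ * (Aᵀ * A * Q) := by rw [Matrix.mul_assoc, Matrix.mul_assoc, hPQ]
    _ = Q := nonsing_inv_mul_cancel_left _ Q hdet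

theorem mul_transpose_injective_of_isUnit_transpose_mul_self [Fintype m] [Fintype o]
    {A : Matrix m n K}
    (h : IsUnit (Aᵀ * A)) : Function.Injective fun P : Matrix o n K => P * Aᵀ := by
  intro P Q hPQ
  simpa using congrArg transpose <| mul_right_injective_of_isUnit_transpose_mul_self h
    (by simpa only [transpose_mul, transpose_transpose] using congrArg transpose hPQ :
      A * Pᵀ = A * Qᵀ)

theorem exists_orthogonal_of_mul_transpose_eq [Fintype m] {J : Type*} [Fintype J] (c : K)
    {Θ Θ' : Matrix m n K} {Λ Λ' : Matrix J n K}
    (hΘ : c • (Θᵀ * Θ) = 1) (hΘ' : c • (Θ'ᵀ * Θ') = 1) (hΛ' : IsUnit (Λ'ᵀ * Λ'))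
    (h : Θ * Λᵀ = Θ' * Λ'ᵀ) :
    ∃ M : Matrix n n K, Mᵀ * M = 1 ∧ M * Mᵀ = 1 ∧ Λ' = Λ * M ∧ Θ' = Θ * M := by
  set M := c • (Θᵀ * Θ')
  have hΛ_eq : Λᵀ = M * Λ'ᵀ :=
    calc Λᵀ = c • (Θᵀ * Θ) * Λᵀ := by rw [hΘ, Matrix.one_mul]
      _ = M * Λ'ᵀ := by simp only [M, Matrix.smul_mul, Matrix.mul_assoc, h]
  have hΛ'_eq : Λ'ᵀ = Mᵀ * Λᵀ :=
    calc Λ'ᵀ = c • (Θ'ᵀ * Θ') * Λ'ᵀ := by rw [hΘ', Matrix.one_mul]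
      _ = Mᵀ * Λᵀ := by
        simp only [M, transpose_smul, transpose_mul, transpose_transpose, Matrix.smul_mul,
          Matrix.mul_assoc, h]
  have hMM : Mᵀ * M = 1 := mul_transpose_injective_of_isUnit_transpose_mul_self hΛ' <| by
    simp only [Matrix.mul_assoc, ← hΛ_eq, ← hΛ'_eq, Matrix.one_mul]
  refine ⟨M, hMM, mul_eq_one_comm.mp hMM, ?_, ?_⟩
  · simpa only [transpose_mul, transpose_transpose] using congrArg transpose hΛ'_eq
  · exact (mul_transpose_injective_of_isUnit_transpose_mul_self hΛ' <| by
      simp only [Matrix.mul_assoc, ← hΛ_eq, h]).symm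

end Matrix

theorem stmt_8_general (n p J d : ℕ) (hn : 0 < n)
    (X : Matrix (Fin n) (Fin p) ℝ)
    (Λ Λ' : Matrix (Fin J) (Fin d) ℝ)
    (b b' : Fin J → ℝ)
    (B B' : Matrix (Fin p) (Fin d) ℝ)
    (hX : X.rank = p) (hΛ' : Λ'.rank = d)
    (hmean : (1 / (n : ℝ)) • ∑ i, (X * B) i = 0)
    (hcov : (1 / (n : ℝ)) • ((X * B)ᵀ * (X * B)) = 1)
    (hmean' : (1 / (n : ℝ)) • ∑ i, (X * B') i = 0)
    (hcov' : (1 / (n : ℝ)) • ((X * B')ᵀ * (X * B')) = 1)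
    (heq : ∀ i, Λ.mulVec ((X * B) i) + b = Λ'.mulVec ((X * B') i) + b') :
    b' = b ∧ ∃ M : Matrix (Fin d) (Fin d) ℝ,
      Mᵀ * M = 1 ∧ M * Mᵀ = 1 ∧ Λ' = Λ * M ∧ B' = B * M := by
  have : NeZero n := ⟨hn.ne'⟩
  have hn_inv : (1 / (n : ℝ)) ≠ 0 := one_div_ne_zero (Nat.cast_ne_zero.mpr hn.ne')
  have hb : b = b' := eq_of_mulVec_add_eq_of_sum_eq_zero
    ((smul_eq_zero.mp hmean).resolve_left hn_inv)
    ((smul_eq_zero.mp hmean').resolve_left hn_inv) heq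
  subst hb
  have hfactor : X * B * Λᵀ = X * B' * Λ'ᵀ := funext fun i => by
    simpa only [mul_apply_eq_vecMul, vecMul_transpose] using add_right_cancel (heq i)
  obtain ⟨M, hMM, hMM', hΛM, hBM⟩ := exists_orthogonal_of_mul_transpose_eq _ hcov hcov'
    (isUnit_transpose_mul_self_of_rank_eq_card (by rw [hΛ', Fintype.card_fin])) hfactor
  refine ⟨rfl, M, hMM, hMM', hΛM, mul_right_injective_of_isUnit_transpose_mul_self
    (isUnit_transpose_mul_self_of_rank_eq_card (by rw [hX, Fintype.card_fin])) ?_⟩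
  simpa only [Matrix.mul_assoc] using hBM

theorem stmt_8 (n p J d : ℕ) (hn : 0 < n)
    (X : Matrix (Fin n) (Fin p) ℝ)
    (Λ Λ' : Matrix (Fin J) (Fin d) ℝ)
    (b b' : Fin J → ℝ)
    (B B' : Matrix (Fin p) (Fin d) ℝ)
    (hX : X.rank = p) (hΛ : Λ.rank = d) (hΛ' : Λ'.rank = d)
    (hmean : (1 / (n : ℝ)) • ∑ i, (X * B) i = 0)
    (hcov : (1 / (n : ℝ)) • ((X * B)ᵀ * (X * B)) = 1)
    (hmean' : (1 / (n : ℝ)) • ∑ i, (X * B') i = 0)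
    (hcov' : (1 / (n : ℝ)) • ((X * B')ᵀ * (X * B')) = 1)
    (heq : ∀ i, Λ.mulVec ((X * B) i) + b = Λ'.mulVec ((X * B') i) + b') :
    b' = b ∧ ∃ M : Matrix (Fin d) (Fin d) ℝ,
      Mᵀ * M = 1 ∧ M * Mᵀ = 1 ∧ Λ' = Λ * M ∧ B' = B * M :=
  stmt_8_general n p J d hn X Λ Λ' b b' B B' hX hΛ' hmean hcov hmean' hcov' heq
end

section
/- Let Ψ ∈ ℝ^{d×d} be symmetric positive definite with Cholesky factorization Ψ = L Lᵀ (L lower triangular, invertible). If Λ Ψ Λᵀ = Λ̃ Ψ Λ̃ᵀ for Λ, Λ̃ ∈ ℝ^{J×d} of rank d, then there exists an invertible matrix M = L U L^{-1} with U orthogonal such that Λ̃ = Λ M. -/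
open Matrix

theorem stmt_9 (J d : ℕ) (Ψ L : Matrix (Fin d) (Fin d) ℝ)
    (hΨ : Ψ.PosDef) (hΨsymm : Ψ.IsSymm)
    (hL : ∀ i j : Fin d, i < j → L i j = 0) (hLinv : IsUnit L)
    (hchol : Ψ = L * Lᵀ)
    (Λ Λ' : Matrix (Fin J) (Fin d) ℝ)
    (hΛ : Λ.rank = d) (hΛ' : Λ'.rank = d)
    (heq : Λ * Ψ * Λᵀ = Λ' * Ψ * Λ'ᵀ) :
    ∃ U : Matrix (Fin d) (Fin d) ℝ, Uᵀ * U = 1 ∧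
      IsUnit (L * U * L⁻¹) ∧ Λ' = Λ * (L * U * L⁻¹) := by
  have hLdet : IsUnit L.det := (Matrix.isUnit_iff_isUnit_det L).mp hLinv
  set A : Matrix (Fin J) (Fin d) ℝ := Λ * L with hA
  set B : Matrix (Fin J) (Fin d) ℝ := Λ' * L with hB
  -- A Aᵀ = B Bᵀ
  have hAB : A * Aᵀ = B * Bᵀ := by
    have h := heq
    rw [hchol] at h
    simp only [hA, hB, Matrix.transpose_mul, Matrix.mul_assoc] at h ⊢
    exact h
  -- G = Aᵀ A is invertible
  set G : Matrix (Fin d) (Fin d) ℝ := Aᵀ * A with hGdef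
  have hrankA : A.rank = d := by
    rw [hA, Matrix.rank_mul_eq_left_of_isUnit_det L Λ hLdet]; exact hΛ
  have hrankG : G.rank = d := by
    rw [hGdef, Matrix.rank_transpose_mul_self]; exact hrankA
  have hG : IsUnit G := by
    have htop : LinearMap.range G.mulVecLin = ⊤ := by
      apply Submodule.eq_top_of_finrank_eq
      simpa [Matrix.rank] using hrankG
    have hsurj : Function.Surjective G.mulVecLin := LinearMap.range_eq_top.mp htop
    have hinj : Function.Injective G.mulVecLin :=
      (LinearMap.injective_iff_surjective (f := G.mulVecLin)).mpr hsurj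
    exact Matrix.mulVec_injective_iff_isUnit.mp hinj
  have hGdet : IsUnit G.det := (Matrix.isUnit_iff_isUnit_det G).mp hG
  have hGinv : G⁻¹ * G = 1 := Matrix.nonsing_inv_mul G hGdet
  have hGinv' : G * G⁻¹ = 1 := Matrix.mul_nonsing_inv G hGdet
  have hGsymm : Gᵀ = G := by rw [hGdef, Matrix.transpose_mul, Matrix.transpose_transpose]
  have hGinvsymm : (G⁻¹)ᵀ = G⁻¹ := by rw [Matrix.transpose_nonsing_inv, hGsymm]
  set U : Matrix (Fin d) (Fin d) ℝ := G⁻¹ * (Aᵀ * B) with hU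
  have hUt : Uᵀ = Bᵀ * A * G⁻¹ := by
    rw [hU, Matrix.transpose_mul, Matrix.transpose_mul, Matrix.transpose_transpose, hGinvsymm,
      Matrix.mul_assoc]
  -- key identities
  have key : A * U * Bᵀ = B * Bᵀ := by
    have h1 : A * U * Bᵀ = A * G⁻¹ * (Aᵀ * (B * Bᵀ)) := by
      simp only [hU, Matrix.mul_assoc]
    rw [h1, ← hAB, show Aᵀ * (A * Aᵀ) = G * Aᵀ by simp only [hGdef, Matrix.mul_assoc],
      show A * G⁻¹ * (G * Aᵀ) = A * (G⁻¹ * G) * Aᵀ by simp only [Matrix.mul_assoc],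
      hGinv, Matrix.mul_one, hAB]
  have key2 : B * Uᵀ * Aᵀ = B * Bᵀ := by
    rw [hUt, show B * (Bᵀ * A * G⁻¹) * Aᵀ = B * Bᵀ * (A * (G⁻¹ * Aᵀ)) by
      simp only [Matrix.mul_assoc], ← hAB]
    calc A * Aᵀ * (A * (G⁻¹ * Aᵀ)) = A * (G * G⁻¹) * Aᵀ := by
          simp only [hGdef, Matrix.mul_assoc]
      _ = A * Aᵀ := by rw [hGinv', Matrix.mul_one]
  have key3 : A * U * Uᵀ * Aᵀ = B * Bᵀ := by
    rw [hUt, show A * U * (Bᵀ * A * G⁻¹) * Aᵀ = (A * U * Bᵀ) * (A * (G⁻¹ * Aᵀ)) by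
      simp only [Matrix.mul_assoc], key, ← hAB]
    calc A * Aᵀ * (A * (G⁻¹ * Aᵀ)) = A * (G * G⁻¹) * Aᵀ := by
          simp only [hGdef, Matrix.mul_assoc]
      _ = A * Aᵀ := by rw [hGinv', Matrix.mul_one]
  -- Projection: A * U = B
  have hproj : A * U = B := by
    have hCC : (A * U - B) * (A * U - B)ᵀ = 0 := by
      have hexp : (A * U - B) * (A * U - B)ᵀ =
          A * U * Uᵀ * Aᵀ - A * U * Bᵀ - B * Uᵀ * Aᵀ + B * Bᵀ := by
        simp only [Matrix.transpose_sub, Matrix.transpose_mul, Matrix.sub_mul, Matrix.mul_sub]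
        simp only [Matrix.mul_assoc]
        abel
      rw [hexp, key, key2, key3]
      abel
    have hCC' : (A * U - B) * (A * U - B)ᴴ = 0 := by
      rwa [Matrix.conjTranspose_eq_transpose_of_trivial]
    have := Matrix.self_mul_conjTranspose_eq_zero.mp hCC'
    exact sub_eq_zero.mp this
  -- U is orthogonal
  have hUUt : U * Uᵀ = 1 := by
    rw [hU, hUt]
    calc G⁻¹ * (Aᵀ * B) * (Bᵀ * A * G⁻¹)
        = G⁻¹ * (Aᵀ * (B * Bᵀ) * (A * G⁻¹)) := by simp only [Matrix.mul_assoc]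
      _ = G⁻¹ * (Aᵀ * (A * Aᵀ) * (A * G⁻¹)) := by rw [← hAB]
      _ = G⁻¹ * (G * (G * G⁻¹)) := by simp only [hGdef, Matrix.mul_assoc]
      _ = 1 := by rw [hGinv', Matrix.mul_one, hGinv]
  have hUtU : Uᵀ * U = 1 := mul_eq_one_comm.mp hUUt
  have hUunit : IsUnit U := @isUnit_of_invertible _ _ U (invertibleOfRightInverse U Uᵀ hUUt)
  have hLinvinv : IsUnit L⁻¹ :=
    (Matrix.isUnit_iff_isUnit_det L⁻¹).mpr (L.isUnit_nonsing_inv_det hLdet)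
  refine ⟨U, hUtU, (hLinv.mul hUunit).mul hLinvinv, ?_⟩
  have h : Λ * L * U * L⁻¹ = Λ' * L * L⁻¹ := by
    have h0 : A * U * L⁻¹ = B * L⁻¹ := by rw [hproj]
    rw [hA, hB] at h0
    exact h0
  calc Λ' = Λ' * (L * L⁻¹) := by rw [Matrix.mul_nonsing_inv L hLdet, Matrix.mul_one]
    _ = Λ' * L * L⁻¹ := by rw [Matrix.mul_assoc]
    _ = Λ * L * U * L⁻¹ := h.symm
    _ = Λ * (L * U * L⁻¹) := by simp only [Matrix.mul_assoc]
end
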